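/- arXiv:1405.5613 — 2 statements merged into one kernel-verified Lean document; each statement's English description precedes it below -/
import Mathlib

section
/- (Claim 2) Let 1 ≤ i ≤ j ≤ n and let l with i ≤ l ≤ j−1 satisfy L(i, l) ≤ R(l, j) and L(i, l+1) ≥ R(l+1, j), and let α* be the solution of R(l, j) − α·τ·(v_{l+1} − v_l) = L(i, l+1) − (1 − α)·τ·(v_{l+1} − v_l). Then: (i) if 0 ≤ α* ≤ 1, the unique minimizer x*(1, i, j) of Θ_{i,j} equals v_l + α*·(v_{l+1} − v_l) and the minimum value OPT(1, i, j) equals R(l, j) − α*·τ·(v_{l+1} − v_l); (ii) if α* < 0, then x*(1, i, j) = v_l and OPT(1, i, j) = R(l, j); (iii) if α* > 1, then x*(1, i, j) = v_{l+1} and OPT(1, i, j) = L(i, l+1). -/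
open Finset

/-- Left evacuation time `L_i(x)`. -/
noncomputable def evacL (v w : ℕ → ℝ) (c τ : ℝ) (n i : ℕ) (x : ℝ) : ℝ :=
  ((Finset.Icc i n).filter (fun l => v l < x)).fold max 0
    (fun l => τ * (x - v l) + (∑ h ∈ Finset.Icc i l, w h) / c)

/-- Right evacuation time `R_j(x)`. -/
noncomputable def evacR (v w : ℕ → ℝ) (c τ : ℝ) (n j : ℕ) (x : ℝ) : ℝ :=
  ((Finset.Icc 1 j).filter (fun l => x < v l)).fold max 0
    (fun l => τ * (v l - x) + (∑ h ∈ Finset.Icc l j, w h) / c)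

/-- 1-sink evacuation cost `Θ_{i,j}(x)`. -/
noncomputable def theta (v w : ℕ → ℝ) (c τ : ℝ) (n i j : ℕ) (x : ℝ) : ℝ :=
  max (evacL v w c τ n i x) (evacR v w c τ n j x)

/-- `OPT(1,i,j)`. -/
noncomputable def OPT1 (v w : ℕ → ℝ) (c τ : ℝ) (n i j : ℕ) : ℝ :=
  sInf (theta v w c τ n i j '' Set.Icc (v i) (v j))

/-- `OPT(p,i,j)` for general `p`. -/
noncomputable def OPTk (v w : ℕ → ℝ) (c τ : ℝ) (n p i j : ℕ) : ℝ :=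
  if p = 1 then OPT1 v w c τ n i j
  else sInf { m : ℝ | ∃ t : ℕ → ℕ, t 0 = i - 1 ∧ t p = j ∧ StrictMonoOn t (Set.Icc 0 p) ∧
        m = (Finset.Icc 1 p).fold max 0 (fun q => OPT1 v w c τ n (t (q - 1) + 1) (t q)) }


lemma foldmax_nonneg (s : Finset ℕ) (f : ℕ → ℝ) : 0 ≤ s.fold max 0 f :=
  (Finset.le_fold_max _).2 (Or.inl le_rfl)

lemma le_foldmax {s : Finset ℕ} {f : ℕ → ℝ} {a : ℕ} (h : a ∈ s) : f a ≤ s.fold max 0 f :=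
  (Finset.le_fold_max _).2 (Or.inr ⟨a, h, le_rfl⟩)

lemma foldmax_le {s : Finset ℕ} {f : ℕ → ℝ} {b : ℝ} (h0 : 0 ≤ b) (h : ∀ a ∈ s, f a ≤ b) :
    s.fold max 0 f ≤ b :=
  (Finset.fold_max_le _).2 ⟨h0, h⟩

lemma evacL_nonneg (v w : ℕ → ℝ) (c τ : ℝ) (n i : ℕ) (x : ℝ) : 0 ≤ evacL v w c τ n i x :=
  foldmax_nonneg _ _

lemma evacR_nonneg (v w : ℕ → ℝ) (c τ : ℝ) (n j : ℕ) (x : ℝ) : 0 ≤ evacR v w c τ n j x :=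
  foldmax_nonneg _ _

lemma evacL_mono (v w : ℕ → ℝ) (c τ : ℝ) (n i : ℕ) (hτ : 0 < τ) {x x' : ℝ} (hxx : x ≤ x') :
    evacL v w c τ n i x ≤ evacL v w c τ n i x' := by
  unfold evacL
  apply foldmax_le (foldmax_nonneg _ _)
  intro a ha
  simp only [Finset.mem_filter] at ha
  have h1 : a ∈ (Finset.Icc i n).filter (fun l => v l < x') :=
    Finset.mem_filter.2 ⟨ha.1, lt_of_lt_of_le ha.2 hxx⟩
  have := le_foldmax (f := fun l => τ * (x' - v l) + (∑ h ∈ Finset.Icc i l, w h) / c) h1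
  have h2 : τ * (x - v a) ≤ τ * (x' - v a) := by nlinarith
  linarith

lemma evacR_anti (v w : ℕ → ℝ) (c τ : ℝ) (n j : ℕ) (hτ : 0 < τ) {x x' : ℝ} (hxx : x ≤ x') :
    evacR v w c τ n j x' ≤ evacR v w c τ n j x := by
  unfold evacR
  apply foldmax_le (foldmax_nonneg _ _)
  intro a ha
  simp only [Finset.mem_filter] at ha
  have h1 : a ∈ (Finset.Icc 1 j).filter (fun l => x < v l) :=
    Finset.mem_filter.2 ⟨ha.1, lt_of_le_of_lt hxx ha.2⟩
  have := le_foldmax (f := fun l => τ * (v l - x) + (∑ h ∈ Finset.Icc l j, w h) / c) h1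
  have h2 : τ * (v a - x') ≤ τ * (v a - x) := by nlinarith
  linarith

lemma evacL_seg (v w : ℕ → ℝ) (c τ : ℝ) (n i l : ℕ)
    (hi : 1 ≤ i) (hil : i ≤ l) (hln : l + 1 ≤ n)
    (hv : StrictMonoOn v (Set.Icc 1 n)) (hw : ∀ h, 1 ≤ h → h ≤ n → 0 < w h)
    (hc : 0 < c) (hτ : 0 < τ) {x : ℝ} (h1 : v l < x) (h2 : x ≤ v (l+1)) :
    evacL v w c τ n i x = evacL v w c τ n i (v (l+1)) - τ * (v (l+1) - x) := by
  unfold evacL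
  have hl1 : (1:ℕ) ≤ l := hi.trans hil
  have hlmem : l ∈ Set.Icc 1 n := ⟨hl1, by omega⟩
  have hl1mem : l + 1 ∈ Set.Icc 1 n := ⟨by omega, hln⟩
  have hΔ : v l < v (l+1) := hv hlmem hl1mem (lt_add_one l)
  -- key index characterization: a ∈ Icc i n ∧ v a < y (for y ∈ (v l, v (l+1)]) ↔ a ∈ Icc i l
  have hidx : ∀ a ∈ Finset.Icc i n, ∀ y : ℝ, v l < y → y ≤ v (l+1) → (v a < y ↔ a ≤ l) := by
    intro a ha y hy1 hy2
    simp only [Finset.mem_Icc] at ha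
    constructor
    · intro hva
      by_contra hcon
      have : l + 1 ≤ a := by omega
      have := hv.monotoneOn hl1mem ⟨by omega, ha.2⟩ this
      linarith
    · intro hal
      have := hv.monotoneOn ⟨hi.trans ha.1, by omega⟩ hlmem hal
      linarith
  have hLp : τ * (v (l+1) - v l) < evacL v w c τ n i (v (l+1)) := by
    have hmem : l ∈ (Finset.Icc i n).filter (fun a => v a < v (l+1)) := by
      simp only [Finset.mem_filter, Finset.mem_Icc]
      exact ⟨⟨hil, by omega⟩, hΔ⟩
    unfold evacL
    have := le_foldmax (f := fun a => τ * (v (l+1) - v a) + (∑ h ∈ Finset.Icc i a, w h) / c) hmem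
    have hsum : 0 < (∑ h ∈ Finset.Icc i l, w h) / c := by
      apply div_pos _ hc
      apply Finset.sum_pos
      · intro h hh
        simp only [Finset.mem_Icc] at hh
        exact hw h (hi.trans hh.1) (by omega)
      · exact Finset.nonempty_Icc.2 hil
    linarith
  unfold evacL at hLp
  apply le_antisymm
  · apply foldmax_le
    · have : τ * (v (l+1) - x) ≤ τ * (v (l+1) - v l) := by nlinarith
      linarith
    · intro a ha
      simp only [Finset.mem_filter] at ha
      have hal : a ≤ l := (hidx a ha.1 x h1 h2).1 ha.2
      have hmem : a ∈ (Finset.Icc i n).filter (fun b => v b < v (l+1)) := by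
        refine Finset.mem_filter.2 ⟨ha.1, ?_⟩
        exact (hidx a ha.1 (v (l+1)) hΔ le_rfl).2 hal
      have := le_foldmax (f := fun b => τ * (v (l+1) - v b) + (∑ h ∈ Finset.Icc i b, w h) / c) hmem
      linarith
  · rw [sub_le_iff_le_add]
    apply foldmax_le
    · have h0 := foldmax_nonneg ((Finset.Icc i n).filter (fun b => v b < x)) (fun b => τ * (x - v b) + (∑ h ∈ Finset.Icc i b, w h) / c)
      nlinarith
    · intro a ha
      simp only [Finset.mem_filter] at ha
      have hal : a ≤ l := (hidx a ha.1 (v (l+1)) hΔ le_rfl).1 ha.2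
      have hmem : a ∈ (Finset.Icc i n).filter (fun b => v b < x) := by
        refine Finset.mem_filter.2 ⟨ha.1, ?_⟩
        exact (hidx a ha.1 x h1 h2).2 hal
      have := le_foldmax (f := fun b => τ * (x - v b) + (∑ h ∈ Finset.Icc i b, w h) / c) hmem
      linarith

lemma evacR_seg (v w : ℕ → ℝ) (c τ : ℝ) (n j l : ℕ)
    (hl1 : 1 ≤ l) (hlj : l + 1 ≤ j) (hjn : j ≤ n)
    (hv : StrictMonoOn v (Set.Icc 1 n)) (hw : ∀ h, 1 ≤ h → h ≤ n → 0 < w h)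
    (hc : 0 < c) (hτ : 0 < τ) {x : ℝ} (h1 : v l ≤ x) (h2 : x < v (l+1)) :
    evacR v w c τ n j x = evacR v w c τ n j (v l) - τ * (x - v l) := by
  unfold evacR
  have hlmem : l ∈ Set.Icc 1 n := ⟨hl1, by omega⟩
  have hl1mem : l + 1 ∈ Set.Icc 1 n := ⟨by omega, by omega⟩
  have hΔ : v l < v (l+1) := hv hlmem hl1mem (lt_add_one l)
  have hidx : ∀ a ∈ Finset.Icc 1 j, ∀ y : ℝ, v l ≤ y → y < v (l+1) → (y < v a ↔ l + 1 ≤ a) := by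
    intro a ha y hy1 hy2
    simp only [Finset.mem_Icc] at ha
    constructor
    · intro hva
      by_contra hcon
      have : a ≤ l := by omega
      have := hv.monotoneOn ⟨ha.1, by omega⟩ hlmem this
      linarith
    · intro hal
      have := hv.monotoneOn hl1mem ⟨by omega, by omega⟩ hal
      linarith
  have hRp : τ * (v (l+1) - v l) < evacR v w c τ n j (v l) := by
    have hmem : l + 1 ∈ (Finset.Icc 1 j).filter (fun a => v l < v a) := by
      simp only [Finset.mem_filter, Finset.mem_Icc]
      exact ⟨⟨by omega, hlj⟩, hΔ⟩
    unfold evacR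
    have := le_foldmax (f := fun a => τ * (v a - v l) + (∑ h ∈ Finset.Icc a j, w h) / c) hmem
    have hsum : 0 < (∑ h ∈ Finset.Icc (l+1) j, w h) / c := by
      apply div_pos _ hc
      apply Finset.sum_pos
      · intro h hh
        simp only [Finset.mem_Icc] at hh
        exact hw h (by omega) (by omega)
      · exact Finset.nonempty_Icc.2 hlj
    linarith
  unfold evacR at hRp
  apply le_antisymm
  · apply foldmax_le
    · have : τ * (x - v l) ≤ τ * (v (l+1) - v l) := by nlinarith
      linarith
    · intro a ha
      simp only [Finset.mem_filter] at ha
      have hal : l + 1 ≤ a := (hidx a ha.1 x h1 h2).1 ha.2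
      have hmem : a ∈ (Finset.Icc 1 j).filter (fun b => v l < v b) := by
        refine Finset.mem_filter.2 ⟨ha.1, ?_⟩
        exact (hidx a ha.1 (v l) le_rfl hΔ).2 hal
      have := le_foldmax (f := fun b => τ * (v b - v l) + (∑ h ∈ Finset.Icc b j, w h) / c) hmem
      linarith
  · rw [sub_le_iff_le_add]
    apply foldmax_le
    · have h0 := foldmax_nonneg ((Finset.Icc 1 j).filter (fun b => x < v b)) (fun b => τ * (v b - x) + (∑ h ∈ Finset.Icc b j, w h) / c)
      nlinarith
    · intro a ha
      simp only [Finset.mem_filter] at ha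
      have hal : l + 1 ≤ a := (hidx a ha.1 (v l) le_rfl hΔ).1 ha.2
      have hmem : a ∈ (Finset.Icc 1 j).filter (fun b => x < v b) := by
        refine Finset.mem_filter.2 ⟨ha.1, ?_⟩
        exact (hidx a ha.1 x h1 h2).2 hal
      have := le_foldmax (f := fun b => τ * (v b - x) + (∑ h ∈ Finset.Icc b j, w h) / c) hmem
      linarith

/-- Claim 2: locating the optimal 1-sink inside the interval
[v_l, v_(l+1)] via the solution αs of
R(l,j) - α·τ·(v_(l+1) - v_l) = L(i,l+1) - (1-α)·τ·(v_(l+1) - v_l). -/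
theorem stmt3 (n : ℕ) (v w : ℕ → ℝ) (c τ : ℝ) (i j l : ℕ) (αs xs : ℝ)
    (hi : 1 ≤ i) (hij : i ≤ j) (hjn : j ≤ n) (hil : i ≤ l) (hlj : l + 1 ≤ j)
    (hv1 : v 1 = 0) (hv : StrictMonoOn v (Set.Icc 1 n))
    (hw : ∀ h, 1 ≤ h → h ≤ n → 0 < w h) (hc : 0 < c) (hτ : 0 < τ)
    (hL : evacL v w c τ n i (v l) ≤ evacR v w c τ n j (v l))
    (hR : evacR v w c τ n j (v (l + 1)) ≤ evacL v w c τ n i (v (l + 1)))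
    (hαs : evacR v w c τ n j (v l) - αs * (τ * (v (l + 1) - v l))
         = evacL v w c τ n i (v (l + 1)) - (1 - αs) * (τ * (v (l + 1) - v l)))
    (hxs : xs ∈ Set.Icc (v i) (v j))
    (hxsmin : ∀ y ∈ Set.Icc (v i) (v j), y ≠ xs →
      theta v w c τ n i j xs < theta v w c τ n i j y) :
    (0 ≤ αs → αs ≤ 1 →
      xs = v l + αs * (v (l + 1) - v l) ∧
      theta v w c τ n i j xs = evacR v w c τ n j (v l) - αs * (τ * (v (l + 1) - v l))) ∧
    (αs < 0 → xs = v l ∧ theta v w c τ n i j xs = evacR v w c τ n j (v l)) ∧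
    (1 < αs → xs = v (l + 1) ∧ theta v w c τ n i j xs = evacL v w c τ n i (v (l + 1))) := by
  have hl1 : (1:ℕ) ≤ l := hi.trans hil
  have hln : l + 1 ≤ n := hlj.trans hjn
  have hlmem : l ∈ Set.Icc 1 n := ⟨hl1, by omega⟩
  have hl1mem : l + 1 ∈ Set.Icc 1 n := ⟨by omega, hln⟩
  have himem : i ∈ Set.Icc 1 n := ⟨hi, by omega⟩
  have hjmem : j ∈ Set.Icc 1 n := ⟨by omega, hjn⟩
  have hΔ : v l < v (l + 1) := hv hlmem hl1mem (lt_add_one l)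
  have hd : (0:ℝ) < v (l + 1) - v l := by linarith
  have hvil : v i ≤ v l := hv.monotoneOn himem hlmem hil
  have hvlj : v (l + 1) ≤ v j := hv.monotoneOn hl1mem hjmem hlj
  have hT : 0 < τ * (v (l + 1) - v l) := mul_pos hτ hd
  have key : ∀ x0 m : ℝ, x0 ∈ Set.Icc (v i) (v j) →
      theta v w c τ n i j x0 ≤ m →
      (∀ y ∈ Set.Icc (v i) (v j), m ≤ theta v w c τ n i j y) →
      xs = x0 ∧ theta v w c τ n i j xs = m := by
    intro x0 m hx0 hA hB
    have hm : m ≤ theta v w c τ n i j xs := hB xs hxs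
    by_cases hx : x0 = xs
    · subst hx; exact ⟨rfl, le_antisymm hA hm⟩
    · exact absurd (hxsmin x0 hx0 hx) (by linarith)
  refine ⟨?_, ?_, ?_⟩
  · -- case 0 ≤ αs ≤ 1
    intro h0 h1
    have hx0l : v l ≤ v l + αs * (v (l + 1) - v l) := by
      linarith [mul_nonneg h0 hd.le]
    have hx0u : v l + αs * (v (l + 1) - v l) ≤ v (l + 1) := by
      have := mul_le_mul_of_nonneg_right h1 hd.le
      linarith
    apply key _ _ ⟨by linarith, by linarith⟩
    · simp only [theta]
      apply max_le
      · rcases eq_or_lt_of_le h0 with h | h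
        · have hx : v l + αs * (v (l + 1) - v l) = v l := by rw [← h]; ring
          rw [hx]
          calc evacL v w c τ n i (v l) ≤ evacR v w c τ n j (v l) := hL
            _ = evacR v w c τ n j (v l) - αs * (τ * (v (l + 1) - v l)) := by
                rw [← h]; ring
        · have hseg := evacL_seg v w c τ n i l hi hil hln hv hw hc hτ
              (x := v l + αs * (v (l + 1) - v l))
              (by linarith [mul_pos h hd]) hx0u
          rw [hseg]
          apply le_of_eq
          linear_combination -hαs
      · rcases eq_or_lt_of_le h1 with h | h
        · have hx : v l + αs * (v (l + 1) - v l) = v (l + 1) := by rw [h]; ring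
          rw [hx]
          refine le_trans hR (le_of_eq ?_)
          linear_combination (-1 : ℝ) * hαs - (τ * (v (l + 1) - v l)) * h
        · have hseg := evacR_seg v w c τ n j l hl1 hlj hjn hv hw hc hτ hx0l
            (show v l + αs * (v (l + 1) - v l) < v (l + 1) by
              linarith [mul_lt_mul_of_pos_right h hd])
          rw [hseg]
          apply le_of_eq
          ring
    · intro y hy
      simp only [theta]
      by_cases hy1 : y ≤ v l
      · refine le_trans ?_ (le_max_right _ _)
        have hanti := evacR_anti v w c τ n j hτ hy1
        linarith [mul_nonneg h0 hT.le]
      · push_neg at hy1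
        by_cases hy2 : v (l + 1) ≤ y
        · refine le_trans ?_ (le_max_left _ _)
          have hmono := evacL_mono v w c τ n i hτ hy2
          linarith [mul_nonneg (by linarith : (0:ℝ) ≤ 1 - αs) hT.le]
        · push_neg at hy2
          by_cases hy3 : y ≤ v l + αs * (v (l + 1) - v l)
          · refine le_trans ?_ (le_max_right _ _)
            have hseg := evacR_seg v w c τ n j l hl1 hlj hjn hv hw hc hτ
                (le_of_lt hy1) hy2
            have h3 : y - v l ≤ αs * (v (l + 1) - v l) := by linarith
            have h4 := mul_le_mul_of_nonneg_left h3 hτ.le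
            have h5 : τ * (αs * (v (l + 1) - v l)) = αs * (τ * (v (l + 1) - v l)) := by
              ring
            rw [hseg]; linarith
          · push_neg at hy3
            refine le_trans ?_ (le_max_left _ _)
            have hseg := evacL_seg v w c τ n i l hi hil hln hv hw hc hτ
                (show v l < y by linarith) (le_of_lt hy2)
            have h3 : v (l + 1) - y ≤ (1 - αs) * (v (l + 1) - v l) := by
              have : (1 - αs) * (v (l + 1) - v l)
                  = (v (l + 1) - v l) - αs * (v (l + 1) - v l) := by ring
              linarith
            have h4 := mul_le_mul_of_nonneg_left h3 hτ.le
            have h5 : τ * ((1 - αs) * (v (l + 1) - v l))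
                = (1 - αs) * (τ * (v (l + 1) - v l)) := by ring
            rw [hseg]; linarith [hαs]
  · -- case αs < 0
    intro hneg
    have hA : 0 ≤ (-αs) * (τ * (v (l + 1) - v l)) :=
      mul_nonneg (by linarith) hT.le
    have h5 : (-αs) * (τ * (v (l + 1) - v l))
        = -(αs * (τ * (v (l + 1) - v l))) := by ring
    have h6 : (1 - αs) * (τ * (v (l + 1) - v l))
        = τ * (v (l + 1) - v l) - αs * (τ * (v (l + 1) - v l)) := by ring
    apply key (v l) _ ⟨hvil, by linarith⟩
    · simp only [theta]
      exact max_le hL le_rfl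
    · intro y hy
      simp only [theta]
      by_cases hy1 : y ≤ v l
      · exact le_trans (evacR_anti v w c τ n j hτ hy1) (le_max_right _ _)
      · push_neg at hy1
        by_cases hy2 : y ≤ v (l + 1)
        · refine le_trans ?_ (le_max_left _ _)
          have hseg := evacL_seg v w c τ n i l hi hil hln hv hw hc hτ hy1 hy2
          have h3 : v (l + 1) - y ≤ v (l + 1) - v l := by linarith
          have h4 := mul_le_mul_of_nonneg_left h3 hτ.le
          rw [hseg]; linarith
        · push_neg at hy2
          refine le_trans ?_ (le_max_left _ _)
          have hmono := evacL_mono v w c τ n i hτ (le_of_lt hy2)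
          linarith
  · -- case 1 < αs
    intro hgt
    have hA : 0 ≤ (αs - 1) * (τ * (v (l + 1) - v l)) :=
      mul_nonneg (by linarith) hT.le
    have h5 : (αs - 1) * (τ * (v (l + 1) - v l))
        = αs * (τ * (v (l + 1) - v l)) - τ * (v (l + 1) - v l) := by ring
    have h6 : (1 - αs) * (τ * (v (l + 1) - v l))
        = τ * (v (l + 1) - v l) - αs * (τ * (v (l + 1) - v l)) := by ring
    apply key (v (l + 1)) _ ⟨by linarith, hvlj⟩
    · simp only [theta]
      exact max_le le_rfl hR
    · intro y hy
      simp only [theta]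
      by_cases hy1 : v (l + 1) ≤ y
      · exact le_trans (evacL_mono v w c τ n i hτ hy1) (le_max_left _ _)
      · push_neg at hy1
        by_cases hy2 : v l ≤ y
        · refine le_trans ?_ (le_max_right _ _)
          have hseg := evacR_seg v w c τ n j l hl1 hlj hjn hv hw hc hτ hy2 hy1
          have h3 : y - v l ≤ v (l + 1) - v l := by linarith
          have h4 := mul_le_mul_of_nonneg_left h3 hτ.le
          rw [hseg]; linarith
        · push_neg at hy2
          refine le_trans ?_ (le_max_right _ _)
          have hanti := evacR_anti v w c τ n j hτ (le_of_lt hy2)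
          linarith
end

section
/- (Lemma 2) For any indices h, i, j, l with 1 ≤ i ≤ j ≤ n, 1 ≤ h ≤ l ≤ n, i ≤ h and j ≤ l, the unique minimizers of the 1-sink evacuation costs satisfy x*(1, i, j) ≤ x*(1, h, l). -/
open Finset

lemma fold_max_mono' {s t : Finset ℕ} {f g : ℕ → ℝ} (hst : s ⊆ t)
    (hfg : ∀ x ∈ s, f x ≤ g x) : s.fold max 0 f ≤ t.fold max 0 g := by
  rw [Finset.fold_max_le]
  refine ⟨(Finset.le_fold_max _).mpr (Or.inl le_rfl), fun x hx => ?_⟩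
  exact (hfg x hx).trans ((Finset.le_fold_max _).mpr (Or.inr ⟨x, hst hx, le_rfl⟩))

lemma evacL_mono_x (v w : ℕ → ℝ) (c τ : ℝ) (n i : ℕ) {x y : ℝ} (hτ : 0 ≤ τ)
    (hyx : y ≤ x) : evacL v w c τ n i y ≤ evacL v w c τ n i x := by
  unfold evacL
  refine fold_max_mono' ?_ ?_
  · intro a ha
    simp only [Finset.mem_filter] at ha ⊢
    exact ⟨ha.1, ha.2.trans_le hyx⟩
  · intro a _
    have : τ * (y - v a) ≤ τ * (x - v a) :=
      mul_le_mul_of_nonneg_left (by linarith) hτ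
    linarith

lemma evacR_anti_x (v w : ℕ → ℝ) (c τ : ℝ) (n j : ℕ) {x y : ℝ} (hτ : 0 ≤ τ)
    (hyx : y ≤ x) : evacR v w c τ n j x ≤ evacR v w c τ n j y := by
  unfold evacR
  refine fold_max_mono' ?_ ?_
  · intro a ha
    simp only [Finset.mem_filter] at ha ⊢
    exact ⟨ha.1, hyx.trans_lt ha.2⟩
  · intro a _
    have : τ * (v a - x) ≤ τ * (v a - y) :=
      mul_le_mul_of_nonneg_left (by linarith) hτ
    linarith

lemma evacL_anti_i (v w : ℕ → ℝ) (c τ : ℝ) (n i h : ℕ) (x : ℝ)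
    (hi : 1 ≤ i) (hih : i ≤ h) (hc : 0 < c)
    (hw : ∀ k, 1 ≤ k → k ≤ n → 0 < w k) :
    evacL v w c τ n h x ≤ evacL v w c τ n i x := by
  unfold evacL
  refine fold_max_mono' ?_ ?_
  · intro a ha
    simp only [Finset.mem_filter, Finset.mem_Icc] at ha ⊢
    exact ⟨⟨hih.trans ha.1.1, ha.1.2⟩, ha.2⟩
  · intro a ha
    simp only [Finset.mem_filter, Finset.mem_Icc] at ha
    have hsum : ∑ k ∈ Finset.Icc h a, w k ≤ ∑ k ∈ Finset.Icc i a, w k := by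
      refine Finset.sum_le_sum_of_subset_of_nonneg
        (Finset.Icc_subset_Icc_left hih) ?_
      intro k hk _
      simp only [Finset.mem_Icc] at hk
      exact (hw k (hi.trans hk.1) (hk.2.trans ha.1.2)).le
    have : (∑ k ∈ Finset.Icc h a, w k) / c ≤ (∑ k ∈ Finset.Icc i a, w k) / c := by
      gcongr
    linarith

lemma evacR_mono_j (v w : ℕ → ℝ) (c τ : ℝ) (n j l : ℕ) (x : ℝ)
    (hjl : j ≤ l) (hln : l ≤ n) (hc : 0 < c)
    (hw : ∀ k, 1 ≤ k → k ≤ n → 0 < w k) :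
    evacR v w c τ n j x ≤ evacR v w c τ n l x := by
  unfold evacR
  refine fold_max_mono' ?_ ?_
  · intro a ha
    simp only [Finset.mem_filter, Finset.mem_Icc] at ha ⊢
    exact ⟨⟨ha.1.1, ha.1.2.trans hjl⟩, ha.2⟩
  · intro a ha
    simp only [Finset.mem_filter, Finset.mem_Icc] at ha
    have hsum : ∑ k ∈ Finset.Icc a j, w k ≤ ∑ k ∈ Finset.Icc a l, w k := by
      refine Finset.sum_le_sum_of_subset_of_nonneg
        (Finset.Icc_subset_Icc_right hjl) ?_
      intro k hk _
      simp only [Finset.mem_Icc] at hk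
      exact (hw k (ha.1.1.trans hk.1) (hk.2.trans hln)).le
    have : (∑ k ∈ Finset.Icc a j, w k) / c ≤ (∑ k ∈ Finset.Icc a l, w k) / c := by
      gcongr
    linarith

/-- Lemma 2: monotonicity of the unique 1-sink minimizers:
if i ≤ h and j ≤ l then x*(1,i,j) ≤ x*(1,h,l). -/
theorem stmt9 (n : ℕ) (v w : ℕ → ℝ) (c τ : ℝ) (h i j l : ℕ) (xs ys : ℝ)
    (hi : 1 ≤ i) (hij : i ≤ j) (hjn : j ≤ n)
    (hh : 1 ≤ h) (hhl : h ≤ l) (hln : l ≤ n) (hih : i ≤ h) (hjl : j ≤ l)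
    (hv1 : v 1 = 0) (hv : StrictMonoOn v (Set.Icc 1 n))
    (hw : ∀ h, 1 ≤ h → h ≤ n → 0 < w h) (hc : 0 < c) (hτ : 0 < τ)
    (hxs : xs ∈ Set.Icc (v i) (v j))
    (hxsmin : ∀ y ∈ Set.Icc (v i) (v j), y ≠ xs →
      theta v w c τ n i j xs < theta v w c τ n i j y)
    (hys : ys ∈ Set.Icc (v h) (v l))
    (hysmin : ∀ y ∈ Set.Icc (v h) (v l), y ≠ ys →
      theta v w c τ n h l ys < theta v w c τ n h l y) :
    xs ≤ ys := by
  by_contra hcon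
  push_neg at hcon
  -- hcon : ys < xs
  have hin : i ≤ n := hij.trans hjn
  have hhn : h ≤ n := hhl.trans hln
  have hvih : v i ≤ v h := hv.monotoneOn ⟨hi, hin⟩ ⟨hh, hhn⟩ hih
  have hvjl : v j ≤ v l := hv.monotoneOn ⟨hi.trans hij, hjn⟩ ⟨hh.trans hhl, hln⟩ hjl
  have hysmem : ys ∈ Set.Icc (v i) (v j) := ⟨hvih.trans hys.1, hcon.le.trans hxs.2⟩
  have hxsmem : xs ∈ Set.Icc (v h) (v l) := ⟨hys.1.trans hcon.le, hxs.2.trans hvjl⟩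
  have h1 := hxsmin ys hysmem hcon.ne
  have h2 := hysmin xs hxsmem hcon.ne'
  simp only [theta] at h1 h2
  have hLiy : evacL v w c τ n i ys ≤ evacL v w c τ n i xs :=
    evacL_mono_x v w c τ n i hτ.le hcon.le
  have hLhi : evacL v w c τ n h xs ≤ evacL v w c τ n i xs :=
    evacL_anti_i v w c τ n i h xs hi hih hc hw
  have hRlx : evacR v w c τ n l xs ≤ evacR v w c τ n l ys :=
    evacR_anti_x v w c τ n l hτ.le hcon.le
  have hRjl : evacR v w c τ n j ys ≤ evacR v w c τ n l ys :=
    evacR_mono_j v w c τ n j l ys hjl hln hc hw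
  -- from h1 : max Lix Rjx < max Liy Rjy, with Liy ≤ Lix, deduce Rjy > max Lix Rjx
  have hRbig : max (evacL v w c τ n i xs) (evacR v w c τ n j xs)
      < evacR v w c τ n j ys := by
    rcases le_or_gt (evacR v w c τ n j ys)
        (max (evacL v w c τ n i xs) (evacR v w c τ n j xs)) with hle | hlt'
    · exact absurd h1 (not_lt.mpr (max_le (hLiy.trans (le_max_left _ _)) hle))
    · exact hlt'
  have hLbig : max (evacL v w c τ n h ys) (evacR v w c τ n l ys)
      < evacL v w c τ n h xs := by
    rcases le_or_gt (evacL v w c τ n h xs)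
        (max (evacL v w c τ n h ys) (evacR v w c τ n l ys)) with hle | hlt'
    · exact absurd h2 (not_lt.mpr (max_le hle (hRlx.trans (le_max_right _ _))))
    · exact hlt'
  have c1 : evacL v w c τ n h xs < evacR v w c τ n j ys :=
    lt_of_le_of_lt (hLhi.trans (le_max_left _ _)) hRbig
  have c2 : evacR v w c τ n j ys < evacL v w c τ n h xs :=
    lt_of_le_of_lt (hRjl.trans (le_max_right _ _)) hLbig
  exact absurd (c1.trans c2) (lt_irrefl _)
end
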